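/- Let q be a prime power, t, r ≥ 1, and let 𝒩 be a q^r-divisible set of t-dimensional subspaces of 𝔽_q^v such that q^r divides #𝒩. Then for each natural number s there exists a q^r-divisible set 𝒩' of (t+s)-dimensional subspaces of 𝔽_q^{v+s} with #𝒩' = #𝒩. -/

import Mathlib

/-!
Take `𝒩' = {X × F^s : X ∈ 𝒩}`. A hyperplane of `F^v × F^s` containing `0 × F^s` has the form
`H₁ × F^s` with `H₁` a hyperplane of `F^v`, and `X × F^s ≤ H₁ × F^s ↔ X ≤ H₁`. A hyperplane not
containing `0 × F^s` contains no `X × F^s`, so for it the congruence reads `#𝒩 ≡ 0`, which is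
`q^r ∣ #𝒩`.
-/

open Module

/-- A set `N` of subspaces of `F^v` is `m`-divisible if
`#N ≡ #{X ∈ N : X ≤ H} (mod m)` for every hyperplane `H` of `F^v`. -/
def IsModDivisible {F : Type} [Field F] {v : ℕ} (m : ℕ)
    (N : Set (Submodule F (Fin v → F))) : Prop :=
  ∀ H : Submodule F (Fin v → F), finrank F H = v - 1 →
    N.ncard ≡ {X ∈ N | X ≤ H}.ncard [MOD m]

namespace Submodule

section Ring

variable {R M M₂ : Type*} [Ring R] [AddCommGroup M] [Module R M] [AddCommGroup M₂] [Module R M₂]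

theorem prod_top_le_prod_top_iff {p p' : Submodule R M} :
    p.prod (⊤ : Submodule R M₂) ≤ p'.prod ⊤ ↔ p ≤ p' := by
  refine ⟨fun h => ?_, fun h => prod_mono h le_rfl⟩
  simpa only [prod_comap_inl] using comap_mono (f := LinearMap.inl R M M₂) h

theorem prod_top_injective : Function.Injective fun p : Submodule R M => p.prod (⊤ : Submodule R M₂) :=
  fun _ _ h => le_antisymm (prod_top_le_prod_top_iff.mp h.le) (prod_top_le_prod_top_iff.mp h.ge)

theorem eq_comap_inl_prod_top {H : Submodule R (M × M₂)} (h : (⊥ : Submodule R M).prod ⊤ ≤ H) :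
    H = (H.comap (LinearMap.inl R M M₂)).prod ⊤ := by
  have hsnd : ∀ y : M₂, ((0 : M), y) ∈ H := fun y => h ⟨(⊥ : Submodule R M).zero_mem, trivial⟩
  ext ⟨x, y⟩
  simp only [mem_prod, mem_comap, LinearMap.inl_apply, mem_top, and_true]
  constructor
  · intro hxy
    simpa using H.sub_mem hxy (hsnd y)
  · intro hx
    simpa using H.add_mem hx (hsnd y)

end Ring

variable {K V W : Type*} [Field K] [AddCommGroup V] [Module K V] [AddCommGroup W] [Module K W]
  [FiniteDimensional K V] [FiniteDimensional K W]

theorem finrank_prod (p : Submodule K V) (q : Submodule K W) :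
    finrank K (p.prod q) = finrank K p + finrank K q := by
  have hrange : LinearMap.range (p.subtype.prodMap q.subtype) = p.prod q := by
    rw [LinearMap.range_prodMap, range_subtype, range_subtype]
  rw [← hrange, LinearMap.finrank_range_of_inj, Module.finrank_prod]
  exact Prod.map_injective.mpr ⟨p.injective_subtype, q.injective_subtype⟩

theorem finrank_prod_top (p : Submodule K V) :
    finrank K (p.prod (⊤ : Submodule K W)) = finrank K p + finrank K W := by
  rw [finrank_prod, finrank_top]

end Submodule

open Submodule

variable {F : Type} [Field F] {v : ℕ}

def finAppendLinearEquiv (F : Type) [Field F] (v s : ℕ) :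
    ((Fin v → F) × (Fin s → F)) ≃ₗ[F] (Fin (v + s) → F) :=
  (LinearEquiv.sumArrowLequivProdArrow (Fin v) (Fin s) F F).symm.trans
    (LinearEquiv.funCongrLeft F F finSumFinEquiv.symm)

def liftSubspace (s : ℕ) (X : Submodule F (Fin v → F)) : Submodule F (Fin (v + s) → F) :=
  (X.prod ⊤).map (finAppendLinearEquiv F v s).toLinearMap

theorem finrank_liftSubspace (s : ℕ) (X : Submodule F (Fin v → F)) :
    finrank F (liftSubspace s X) = finrank F X + s := by
  rw [liftSubspace, LinearEquiv.finrank_map_eq, finrank_prod_top, Module.finrank_fin_fun]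

theorem liftSubspace_injective (s : ℕ) : Function.Injective (liftSubspace (F := F) (v := v) s) :=
  (map_injective_of_injective (finAppendLinearEquiv F v s).injective).comp prod_top_injective

theorem liftSubspace_le_hyperplane_cases (s : ℕ) (H : Submodule F (Fin (v + s) → F))
    (hH : finrank F H = v + s - 1) :
    (∃ H₁ : Submodule F (Fin v → F), finrank F H₁ = v - 1 ∧
        ∀ X, liftSubspace s X ≤ H ↔ X ≤ H₁) ∨
      ∀ X, ¬ liftSubspace s X ≤ H := by
  set e := finAppendLinearEquiv F v s
  set H₀ := H.comap e.toLinearMap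
  have hle : ∀ X, liftSubspace s X ≤ H ↔ X.prod ⊤ ≤ H₀ := fun X => map_le_iff_le_comap
  by_cases hfib : (⊥ : Submodule F (Fin v → F)).prod ⊤ ≤ H₀
  · set H₁ := H₀.comap (LinearMap.inl F (Fin v → F) (Fin s → F))
    have hH₀ : H₀ = H₁.prod ⊤ := eq_comap_inl_prod_top hfib
    refine .inl ⟨H₁, ?_, fun X => by rw [hle, hH₀, prod_top_le_prod_top_iff]⟩
    have hsplit : finrank F H₀ = finrank F H₁ + s := by
      rw [hH₀, finrank_prod_top, Module.finrank_fin_fun]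
    have hH₀rank : finrank F H₀ = v + s - 1 := by
      rw [show H₀ = H.map e.symm.toLinearMap from comap_equiv_eq_map_symm e H,
        LinearEquiv.finrank_map_eq, hH]
    have hbound : finrank F H₁ ≤ v := (finrank_le H₁).trans_eq (Module.finrank_fin_fun F)
    omega
  · exact .inr fun X hX => hfib ((prod_mono bot_le le_rfl).trans ((hle X).mp hX))

theorem IsModDivisible.image_liftSubspace {m : ℕ} {N : Set (Submodule F (Fin v → F))}
    (hdiv : IsModDivisible m N) (hdvd : m ∣ N.ncard) (s : ℕ) :
    IsModDivisible m (liftSubspace s '' N) := by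
  intro H hH
  rw [Set.ncard_image_of_injective N (liftSubspace_injective s)]
  rcases liftSubspace_le_hyperplane_cases s H hH with ⟨H₁, hH₁, hle⟩ | hnot
  · have hsep : {Y ∈ liftSubspace s '' N | Y ≤ H} = liftSubspace s '' {X ∈ N | X ≤ H₁} := by
      ext Y
      simp only [Set.mem_sep_iff, Set.mem_image]
      grind
    rw [hsep, Set.ncard_image_of_injective _ (liftSubspace_injective s)]
    exact hdiv H₁ hH₁
  · have hsep : {Y ∈ liftSubspace s '' N | Y ≤ H} = ∅ := by
      ext Y
      simp only [Set.mem_image, Set.mem_empty_iff_false, iff_false]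
      rintro ⟨⟨X, -, rfl⟩, hX⟩
      exact hnot X hX
    rw [hsep, Set.ncard_empty]
    exact Nat.modEq_zero_iff_dvd.mpr hdvd

theorem lift_divisible_set_general (q v t r s : ℕ)
    (F : Type) [Field F]
    (N : Set (Submodule F (Fin v → F)))
    (hNt : ∀ X ∈ N, finrank F X = t)
    (hdiv : IsModDivisible (q ^ r) N)
    (hdvd : q ^ r ∣ N.ncard) :
    ∃ N' : Set (Submodule F (Fin (v + s) → F)),
      (∀ X ∈ N', finrank F X = t + s) ∧
      IsModDivisible (q ^ r) N' ∧
      N'.ncard = N.ncard := by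
  refine ⟨liftSubspace s '' N, ?_, hdiv.image_liftSubspace hdvd s,
    Set.ncard_image_of_injective N (liftSubspace_injective s)⟩
  rintro _ ⟨X, hX, rfl⟩
  rw [finrank_liftSubspace, hNt X hX]

/-- If `N` is a `q^r`-divisible set of `t`-subspaces of `F_q^v` whose cardinality is
divisible by `q^r`, then for each `s` there is a `q^r`-divisible set of
`(t+s)`-subspaces of `F_q^(v+s)` of the same cardinality. -/
theorem lift_divisible_set (q v t r s : ℕ) (ht : 1 ≤ t) (hr : 1 ≤ r)
    (F : Type) [Field F] [Fintype F] (hq : Fintype.card F = q)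
    (N : Set (Submodule F (Fin v → F)))
    (hNt : ∀ X ∈ N, finrank F X = t)
    (hdiv : IsModDivisible (q ^ r) N)
    (hdvd : q ^ r ∣ N.ncard) :
    ∃ N' : Set (Submodule F (Fin (v + s) → F)),
      (∀ X ∈ N', finrank F X = t + s) ∧
      IsModDivisible (q ^ r) N' ∧
      N'.ncard = N.ncard :=
  lift_divisible_set_general q v t r s F N hNt hdiv hdvd
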